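/- arXiv:2301.03129 — 2 statements merged into one kernel-verified Lean document; each statement's English description precedes it below -/
import Mathlib

section
/- The positivity-admissible set of ideal magnetohydrodynamics, G_P = {(ρ, m, B, E) ∈ ℝ × ℝᵈ × ℝᵈ × ℝ : ρ > 0 and E − ‖m‖²/(2ρ) − ‖B‖²/2 > 0}, is a convex subset of ℝ × ℝᵈ × ℝᵈ × ℝ. -/
open scoped RealInnerProductSpace

lemma norm_smul_add_sq {d : ℕ} (a b : ℝ) (x y : EuclideanSpace ℝ (Fin d)) :
    ‖a • x + b • y‖ ^ 2 = a ^ 2 * ‖x‖ ^ 2 + 2 * (a * b * ⟪x, y⟫) + b ^ 2 * ‖y‖ ^ 2 := by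
  rw [norm_add_sq_real, inner_smul_left, inner_smul_right, norm_smul, norm_smul]
  simp [mul_pow, sq_abs]
  ring

lemma key_persp {d : ℕ} (x y : EuclideanSpace ℝ (Fin d)) (s t a b : ℝ)
    (hs : 0 < s) (ht : 0 < t) (ha : 0 ≤ a) (hb : 0 ≤ b) (hab : a + b = 1) :
    ‖a • x + b • y‖ ^ 2 / (2 * (a * s + b * t)) ≤
      a * (‖x‖ ^ 2 / (2 * s)) + b * (‖y‖ ^ 2 / (2 * t)) := by
  have hd : 0 < a * s + b * t := by
    rcases eq_or_lt_of_le ha with h | h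
    · have hb1 : b = 1 := by linarith
      simp [← h, hb1, ht]
    · nlinarith
  have hc : ⟪x, y⟫ ≤ ‖x‖ * ‖y‖ := real_inner_le_norm x y
  rw [div_le_iff₀ (by positivity), norm_smul_add_sq]
  have h1 : 0 ≤ (t * ‖x‖ - s * ‖y‖) ^ 2 := sq_nonneg _
  have hxn : 0 ≤ ‖x‖ := norm_nonneg x
  have hyn : 0 ≤ ‖y‖ := norm_nonneg y
  have h2 : a * b * (s * t) * ⟪x, y⟫ ≤ a * b * (s * t) * (‖x‖ * ‖y‖) := by
    apply mul_le_mul_of_nonneg_left hc; positivity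
  have expand : (a * (‖x‖ ^ 2 / (2 * s)) + b * (‖y‖ ^ 2 / (2 * t))) * (2 * (a * s + b * t))
      = a ^ 2 * ‖x‖ ^ 2 + b ^ 2 * ‖y‖ ^ 2
        + a * b * (t / s * ‖x‖ ^ 2 + s / t * ‖y‖ ^ 2) := by
    field_simp
    ring
  rw [expand]
  have hrw : t / s * ‖x‖ ^ 2 + s / t * ‖y‖ ^ 2
      = (t ^ 2 * ‖x‖ ^ 2 + s ^ 2 * ‖y‖ ^ 2) / (s * t) := by
    field_simp
  have h3 : 2 * (a * b * ⟪x, y⟫) ≤ a * b * (t / s * ‖x‖ ^ 2 + s / t * ‖y‖ ^ 2) := by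
    rw [hrw, ← mul_div_assoc, le_div_iff₀ (by positivity)]
    nlinarith [mul_nonneg (mul_nonneg ha hb) h1,
      mul_nonneg (mul_nonneg ha hb) (mul_nonneg (mul_nonneg hs.le ht.le)
        (sub_nonneg.mpr hc))]
  linarith

lemma key_B {d : ℕ} (x y : EuclideanSpace ℝ (Fin d)) (a b : ℝ)
    (ha : 0 ≤ a) (hb : 0 ≤ b) (hab : a + b = 1) :
    ‖a • x + b • y‖ ^ 2 / 2 ≤ a * (‖x‖ ^ 2 / 2) + b * (‖y‖ ^ 2 / 2) := by
  rw [norm_smul_add_sq]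
  have hc : ⟪x, y⟫ ≤ ‖x‖ * ‖y‖ := real_inner_le_norm x y
  have h1 := sq_nonneg (‖x‖ - ‖y‖)
  have ea : a ^ 2 = a - a * b := by linear_combination a * hab
  have eb : b ^ 2 = b - a * b := by linear_combination b * hab
  nlinarith [mul_nonneg (mul_nonneg ha hb) h1,
    mul_nonneg (mul_nonneg ha hb) (sub_nonneg.mpr hc)]

/-- The positivity-admissible set of ideal MHD,
`G_P = {(ρ, m, B, E) : ρ > 0 ∧ E − ‖m‖²/(2ρ) − ‖B‖²/2 > 0}`, is convex. -/
theorem positivity_set_convex (d : ℕ) (hd : 1 ≤ d) :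
    Convex ℝ {u : ℝ × EuclideanSpace ℝ (Fin d) × EuclideanSpace ℝ (Fin d) × ℝ |
      0 < u.1 ∧ 0 < u.2.2.2 - ‖u.2.1‖ ^ 2 / (2 * u.1) - ‖u.2.2.1‖ ^ 2 / 2} := by
  rintro ⟨ρ₁, m₁, B₁, E₁⟩ ⟨h1ρ, h1P⟩ ⟨ρ₂, m₂, B₂, E₂⟩ ⟨h2ρ, h2P⟩ a b ha hb hab
  simp only [Set.mem_setOf_eq, Prod.smul_mk, Prod.mk_add_mk, smul_eq_mul] at *
  have hconv : ∀ x y : ℝ, 0 < x → 0 < y → 0 < a * x + b * y := by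
    intro x y hx hy
    rcases eq_or_lt_of_le ha with h | h
    · have hb1 : b = 1 := by linarith
      simp [← h, hb1, hy]
    · nlinarith [mul_pos h hx, mul_nonneg hb hy.le]
  have hρ : 0 < a * ρ₁ + b * ρ₂ := hconv _ _ h1ρ h2ρ
  refine ⟨hρ, ?_⟩
  have hm := key_persp m₁ m₂ ρ₁ ρ₂ a b h1ρ h2ρ ha hb hab
  have hB := key_B B₁ B₂ a b ha hb hab
  have hP := hconv _ _ h1P h2P
  linarith [hm, hB, hP]
end

section
/- Fix γ > 1 and σ₀ ≥ 0. The entropy-constrained admissible set G = {(ρ, m, B, E) ∈ ℝ × ℝᵈ × ℝᵈ × ℝ : ρ > 0 and (γ−1)(E − ‖m‖²/(2ρ) − ‖B‖²/2) ≥ σ₀ ρ^γ} is a convex subset of ℝ × ℝᵈ × ℝᵈ × ℝ. -/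
/-- Scalar version of the perspective inequality. -/
lemma scalar_div_ineq (p q x y : ℝ) (hp : 0 < p) (hq : 0 < q) :
    (x + y) ^ 2 / (p + q) ≤ x ^ 2 / p + y ^ 2 / q := by
  rw [div_add_div _ _ (ne_of_gt hp) (ne_of_gt hq),
    div_le_div_iff₀ (by positivity) (by positivity)]
  nlinarith [sq_nonneg (q * x - p * y), sq_nonneg x, sq_nonneg y]

/-- Vector perspective inequality: `‖u+v‖²/(p+q) ≤ ‖u‖²/p + ‖v‖²/q`. -/
lemma norm_sq_div_ineq {E : Type*} [NormedAddCommGroup E] (u v : E) (p q : ℝ)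
    (hp : 0 < p) (hq : 0 < q) : ‖u + v‖ ^ 2 / (p + q) ≤ ‖u‖ ^ 2 / p + ‖v‖ ^ 2 / q := by
  calc ‖u + v‖ ^ 2 / (p + q) ≤ (‖u‖ + ‖v‖) ^ 2 / (p + q) := by
        have h2 : ‖u + v‖ ^ 2 ≤ (‖u‖ + ‖v‖) ^ 2 :=
          pow_le_pow_left₀ (norm_nonneg _) (norm_add_le u v) 2
        exact (div_le_div_iff_of_pos_right (by linarith)).mpr h2
    _ ≤ ‖u‖ ^ 2 / p + ‖v‖ ^ 2 / q := scalar_div_ineq p q ‖u‖ ‖v‖ hp hq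

/-- For `γ > 1` and `σ₀ ≥ 0`, the entropy-constrained admissible set
`G = {(ρ, m, B, E) : ρ > 0 ∧ (γ−1)(E − ‖m‖²/(2ρ) − ‖B‖²/2) ≥ σ₀ ρ^γ}` is convex. -/
theorem entropy_set_convex (d : ℕ) (hd : 1 ≤ d) (γ σ₀ : ℝ) (hγ : 1 < γ) (hσ₀ : 0 ≤ σ₀) :
    Convex ℝ {u : ℝ × EuclideanSpace ℝ (Fin d) × EuclideanSpace ℝ (Fin d) × ℝ |
      0 < u.1 ∧
        σ₀ * u.1 ^ γ ≤ (γ - 1) * (u.2.2.2 - ‖u.2.1‖ ^ 2 / (2 * u.1) - ‖u.2.2.1‖ ^ 2 / 2)} := by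
  intro x hx y hy a b ha hb hab
  obtain ⟨hx1, hx2⟩ := hx
  obtain ⟨hy1, hy2⟩ := hy
  rcases eq_or_lt_of_le ha with rfl | ha'
  · simp only [zero_add] at hab
    subst hab
    simpa using ⟨hy1, hy2⟩
  rcases eq_or_lt_of_le hb with rfl | hb'
  · simp only [add_zero] at hab
    subst hab
    simpa using ⟨hx1, hx2⟩
  have hane : a ≠ 0 := ha'.ne'
  have hbne : b ≠ 0 := hb'.ne'
  have hx1ne : x.1 ≠ 0 := hx1.ne'
  have hy1ne : y.1 ≠ 0 := hy1.ne'
  have hρ : 0 < a * x.1 + b * y.1 := add_pos (mul_pos ha' hx1) (mul_pos hb' hy1)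
  simp only [Set.mem_setOf_eq, Prod.fst_add, Prod.snd_add, Prod.smul_fst, Prod.smul_snd,
    smul_eq_mul]
  refine ⟨hρ, ?_⟩
  -- rpow convexity
  have hr := (convexOn_rpow hγ.le).2 (Set.mem_Ici.mpr hx1.le) (Set.mem_Ici.mpr hy1.le) ha hb hab
  simp only [smul_eq_mul] at hr
  -- momentum perspective bound
  have hm := norm_sq_div_ineq (a • x.2.1) (b • y.2.1) (a * x.1) (b * y.1)
    (mul_pos ha' hx1) (mul_pos hb' hy1)
  rw [norm_smul, norm_smul, Real.norm_eq_abs, Real.norm_eq_abs, abs_of_pos ha',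
    abs_of_pos hb'] at hm
  have hm' : ‖a • x.2.1 + b • y.2.1‖ ^ 2 / (a * x.1 + b * y.1) ≤
      a * (‖x.2.1‖ ^ 2 / x.1) + b * (‖y.2.1‖ ^ 2 / y.1) := by
    refine hm.trans (le_of_eq ?_)
    field_simp
  -- magnetic field convexity bound
  have hk := norm_sq_div_ineq (a • x.2.2.1) (b • y.2.2.1) a b ha' hb'
  rw [hab, div_one, norm_smul, norm_smul, Real.norm_eq_abs, Real.norm_eq_abs,
    abs_of_pos ha', abs_of_pos hb'] at hk
  have hk' : ‖a • x.2.2.1 + b • y.2.2.1‖ ^ 2 ≤ a * ‖x.2.2.1‖ ^ 2 + b * ‖y.2.2.1‖ ^ 2 := by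
    refine hk.trans (le_of_eq ?_)
    field_simp
  have H1 : a * (σ₀ * x.1 ^ γ) ≤
      a * ((γ - 1) * (x.2.2.2 - ‖x.2.1‖ ^ 2 / (2 * x.1) - ‖x.2.2.1‖ ^ 2 / 2)) :=
    mul_le_mul_of_nonneg_left hx2 ha
  have H2 : b * (σ₀ * y.1 ^ γ) ≤
      b * ((γ - 1) * (y.2.2.2 - ‖y.2.1‖ ^ 2 / (2 * y.1) - ‖y.2.2.1‖ ^ 2 / 2)) :=
    mul_le_mul_of_nonneg_left hy2 hb
  have H3 : σ₀ * (a * x.1 + b * y.1) ^ γ ≤ σ₀ * (a * x.1 ^ γ + b * y.1 ^ γ) :=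
    mul_le_mul_of_nonneg_left hr hσ₀
  have hγ1 : (0:ℝ) ≤ γ - 1 := by linarith
  have H4 : (γ - 1) * (‖a • x.2.1 + b • y.2.1‖ ^ 2 / (a * x.1 + b * y.1)) ≤
      (γ - 1) * (a * (‖x.2.1‖ ^ 2 / x.1) + b * (‖y.2.1‖ ^ 2 / y.1)) :=
    mul_le_mul_of_nonneg_left hm' hγ1
  have H5 : (γ - 1) * ‖a • x.2.2.1 + b • y.2.2.1‖ ^ 2 ≤
      (γ - 1) * (a * ‖x.2.2.1‖ ^ 2 + b * ‖y.2.2.1‖ ^ 2) :=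
    mul_le_mul_of_nonneg_left hk' hγ1
  have e1 : ‖x.2.1‖ ^ 2 / (2 * x.1) = (‖x.2.1‖ ^ 2 / x.1) / 2 := by ring
  have e2 : ‖y.2.1‖ ^ 2 / (2 * y.1) = (‖y.2.1‖ ^ 2 / y.1) / 2 := by ring
  have e3 : ‖a • x.2.1 + b • y.2.1‖ ^ 2 / (2 * (a * x.1 + b * y.1)) =
      (‖a • x.2.1 + b • y.2.1‖ ^ 2 / (a * x.1 + b * y.1)) / 2 := by
    rw [div_div, mul_comm 2 (a * x.1 + b * y.1)]
  rw [e3]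
  rw [e1] at H1
  rw [e2] at H2
  ring_nf at H1 H2 H3 H4 H5 ⊢
  linarith [H1, H2, H3, H4, H5]
end
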